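/- Let L_{-2} : ℤ[x^{±1}, v^{±2}] → ℤ[v^{±1}] be the ℤ[v^{±2}]-linear map sending x^a to v^{a²}, where q = v². Then for every nonnegative integer k, L_{-2}((x;q)_{k+1}(x^{-1};q)_{k+1}) = 2(1-v)·(-v²;-v)_{2k}. -/

import Mathlib

open LaurentPolynomial Finset

/-- The ring `ℤ[v^{±1}]` of Laurent polynomials in `v`. -/
noncomputable abbrev Rv := LaurentPolynomial ℤ

/-- The `ℤ[v^{±2}]`-linear "Laplace transform" on `ℤ[x^{±1}, v^{±2}]`
(modeled as Laurent polynomials in `x` over `ℤ[v^{±1}]`), sending `x^a ↦ g a`. -/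
noncomputable def Lap (g : ℤ → Rv) (f : LaurentPolynomial Rv) : Rv :=
  Finsupp.sum f.coeff fun a c => c * g a

/-!
Write `W_k = ∏_{|j| ≤ k} (1 - x q^j)` and `M_k(m) = L_{-2}(x^m W_k)`. Pulling `-x⁻¹q^i` out
of each factor of `(x⁻¹;q)_{k+1}` turns the argument of `L_{-2}` into
`± q^{k(k+1)/2} x^{-k-1} (1 - x) W_k`. Since `L_{-2}` is invariant under `x ↦ x⁻¹` and
`W_k(x⁻¹) = -x^{-2k-1} W_k(x)`, we get `M_k(-k) = -M_k(-k-1)`, so the left side is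
`2 (± q^{k(k+1)/2}) M_k(-k-1)`.
Completing the square gives `L_{-2}(f(qx)) = v⁻¹ L_{-2}(x f(x))`; applied to the functional
equation `(1 - x q^{-k}) W_k(qx) = (1 - x q^{k+1}) W_k(x)` it expresses `M_k(-k-2)` through
`M_k(-k-1)`. Expanding `W_{k+1} = (1 - x q^{-k-1}) (1 - x q^{k+1}) W_k` then yields a
first-order recursion in `k` whose factor is, after normalization, `(1 + v^{2k+2}) (1 - v^{2k+3})`.
-/

noncomputable def lapₗ (g : ℤ → Rv) : Rv[T;T⁻¹] →ₗ[Rv] Rv :=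
  Finsupp.linearCombination Rv g ∘ₗ (AddMonoidAlgebra.coeffLinearEquiv Rv).toLinearMap

/-- The substitution `x ↦ q x`. -/
noncomputable def qShift : Rv[T;T⁻¹] →ₐ[Rv] Rv[T;T⁻¹] :=
  AddMonoidAlgebra.lift Rv (Rv[T;T⁻¹]) ℤ
    { toFun := fun n => C (T (2 * n.toAdd)) * T n.toAdd
      map_one' := by simp
      map_mul' := fun m n => by simp only [toAdd_mul, mul_add, T_add, map_mul]; ring }

theorem qShift_T (n : ℤ) : qShift (T n) = C (T (2 * n)) * T n := by
  rw [qShift, T, AddMonoidAlgebra.lift_single, one_smul]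
  rfl

theorem qShift_C (r : Rv) : qShift (C r) = C r := by
  rw [C_eq_algebraMap]; exact qShift.commutes r

section Lap

variable (g : ℤ → Rv)

theorem lap_sub (f₁ f₂ : Rv[T;T⁻¹]) : Lap g (f₁ - f₂) = Lap g f₁ - Lap g f₂ :=
  map_sub (lapₗ g) f₁ f₂

theorem lap_neg (f : Rv[T;T⁻¹]) : Lap g (-f) = -Lap g f :=
  map_neg (lapₗ g) f

theorem lap_add (f₁ f₂ : Rv[T;T⁻¹]) : Lap g (f₁ + f₂) = Lap g f₁ + Lap g f₂ :=
  map_add (lapₗ g) f₁ f₂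

theorem lap_C_mul (r : Rv) (f : Rv[T;T⁻¹]) : Lap g (C r * f) = r * Lap g f := by
  rw [← smul_eq_C_mul]
  exact map_smul (lapₗ g) r f

theorem lap_T (n : ℤ) : Lap g (T n) = g n := by
  rw [Lap, T, AddMonoidAlgebra.coeff_single, Finsupp.sum_single_index (zero_mul _), one_mul]

theorem lap_C_mul_T (c : Rv) (n : ℤ) : Lap g (C c * T n) = c * g n := by
  rw [lap_C_mul, lap_T]

theorem lap_const_mul (r : Rv) (f : Rv[T;T⁻¹]) : Lap (fun a => r * g a) f = r * Lap g f := by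
  induction f using LaurentPolynomial.induction_on' with
  | add p q hp hq => rw [lap_add, lap_add, hp, hq, mul_add]
  | C_mul_T n c => rw [lap_C_mul_T, lap_C_mul_T, mul_left_comm]

theorem lap_T_mul (m : ℤ) (f : Rv[T;T⁻¹]) : Lap g (T m * f) = Lap (fun a => g (m + a)) f := by
  induction f using LaurentPolynomial.induction_on' with
  | add p q hp hq => rw [mul_add, lap_add, lap_add, hp, hq]
  | C_mul_T n c => rw [mul_left_comm, ← T_add, lap_C_mul_T, lap_C_mul_T]

theorem lap_invert (f : Rv[T;T⁻¹]) : Lap g (invert f) = Lap (fun a => g (-a)) f := by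
  induction f using LaurentPolynomial.induction_on' with
  | add p q hp hq => rw [map_add, lap_add, lap_add, hp, hq]
  | C_mul_T n c => rw [map_mul, invert_C, invert_T, lap_C_mul_T, lap_C_mul_T]

theorem lap_qShift (f : Rv[T;T⁻¹]) : Lap g (qShift f) = Lap (fun a => T (2 * a) * g a) f := by
  induction f using LaurentPolynomial.induction_on' with
  | add p q hp hq => rw [map_add, lap_add, lap_add, hp, hq]
  | C_mul_T n c => rw [map_mul, qShift_C, qShift_T, ← mul_assoc, ← map_mul, lap_C_mul_T,
      lap_C_mul_T, mul_assoc]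

theorem lap_T_mul_one_sub_mul (m : ℤ) (c : Rv) (f : Rv[T;T⁻¹]) :
    Lap g (T m * ((1 - T 1 * C c) * f)) = Lap g (T m * f) - c * Lap g (T (m + 1) * f) := by
  rw [T_add, show T m * ((1 - T 1 * C c) * f) = T m * f - C c * (T m * T 1 * f) by ring,
    lap_sub, lap_C_mul]

end Lap

local notation "𝓛" => Lap fun a : ℤ => T (a ^ 2)

theorem gauss_invert (f : Rv[T;T⁻¹]) : 𝓛 (invert f) = 𝓛 f := by
  simp only [lap_invert, neg_sq]

theorem gauss_T_mul_qShift (m : ℤ) (f : Rv[T;T⁻¹]) :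
    𝓛 (T m * qShift f) = T (-(2 * m + 1)) * 𝓛 (T (m + 1) * f) := by
  rw [lap_T_mul, lap_qShift, lap_T_mul, ← lap_const_mul]
  congr 1
  funext a
  rw [← T_add, ← T_add]
  ring_nf

/-- `(x q^a; q)_n`, where `x = T 1` and `q = C (T 2)`. -/
noncomputable def qPoch (a : ℤ) (n : ℕ) : Rv[T;T⁻¹] :=
  ∏ i ∈ range n, (1 - T 1 * C (T (2 * (a + i))))

theorem qPoch_zero (a : ℤ) : qPoch a 0 = 1 := prod_range_zero _

theorem qPoch_succ (a : ℤ) (n : ℕ) :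
    qPoch a (n + 1) = qPoch a n * (1 - T 1 * C (T (2 * (a + n)))) :=
  prod_range_succ _ _

theorem qPoch_add (a : ℤ) (m n : ℕ) : qPoch a (m + n) = qPoch a m * qPoch (a + m) n := by
  simp only [qPoch, prod_range_add, Nat.cast_add, add_assoc]

theorem qPoch_succ' (a : ℤ) (n : ℕ) :
    qPoch a (n + 1) = (1 - T 1 * C (T (2 * a))) * qPoch (a + 1) n := by
  rw [add_comm n, qPoch_add, Nat.cast_one, qPoch_succ, qPoch_zero, one_mul, Nat.cast_zero, add_zero]

theorem qShift_qPoch (a : ℤ) (n : ℕ) : qShift (qPoch a n) = qPoch (a + 1) n := by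
  simp only [qPoch, map_prod, map_sub, map_one, map_mul, qShift_T, qShift_C]
  refine prod_congr rfl fun i _ => ?_
  rw [mul_right_comm, ← map_mul, ← T_add, mul_comm, mul_one]
  congr 4
  ring

theorem qShift_one_sub_mul_qPoch (a : ℤ) (n : ℕ) :
    qShift ((1 - T 1 * C (T (2 * (a - 1)))) * qPoch a n) =
      (1 - T 1 * C (T (2 * (a + n)))) * qPoch a n := by
  obtain ⟨b, rfl⟩ : ∃ b, a = b + 1 := ⟨a - 1, by ring⟩
  rw [add_sub_cancel_right, ← qPoch_succ', qShift_qPoch, qPoch_succ, mul_comm]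

theorem invert_one_sub_T_mul_C (b : ℤ) :
    invert (R := Rv) (1 - T 1 * C (T b)) =
      -(T (-1) * C (T b) : Rv[T;T⁻¹]) * (1 - T 1 * C (T (-b))) := by
  have hT : (T 1 * T (-1) : Rv[T;T⁻¹]) = 1 := by rw [← T_add, add_neg_cancel, T_zero]
  have hC : (C (T b) * C (T (-b)) : Rv[T;T⁻¹]) = 1 := by
    rw [← map_mul, ← T_add, add_neg_cancel, T_zero, map_one]
  rw [map_sub, map_one, map_mul, invert_T, invert_C]
  linear_combination -hT - (T 1 * T (-1)) * hC

theorem invert_qPoch (a : ℤ) (n : ℕ) :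
    invert (qPoch a n) =
      (-1 : Rv[T;T⁻¹]) ^ n * C (T (n * (2 * a + n - 1))) * T (-n) * qPoch (1 - a - n) n := by
  induction n generalizing a with
  | zero => simp [qPoch_zero, T_zero]
  | succ n ih =>
    rw [qPoch_succ', map_mul, invert_one_sub_T_mul_C, ih, qPoch_succ,
      show 1 - (a + 1) - n = 1 - a - ((n + 1 : ℕ) : ℤ) by push_cast; ring,
      show 2 * (1 - a - ((n + 1 : ℕ) : ℤ) + n) = -(2 * a) by push_cast; ring,
      show ((n + 1 : ℕ) : ℤ) * (2 * a + ((n + 1 : ℕ) : ℤ) - 1) = 2 * a + n * (2 * (a + 1) + n - 1)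
        by push_cast; ring,
      show -((n + 1 : ℕ) : ℤ) = -1 + -n by push_cast; ring, T_add, T_add, map_mul, pow_succ]
    ring

theorem invert_qPoch_window (k : ℕ) :
    invert (qPoch (-k) (2 * k + 1)) = -(T (-(2 * k + 1)) * qPoch (-k) (2 * k + 1)) := by
  rw [invert_qPoch,
    show ((2 * k + 1 : ℕ) : ℤ) * (2 * -k + (2 * k + 1 : ℕ) - 1) = 0 by push_cast; ring,
    show 1 - -(k : ℤ) - (2 * k + 1 : ℕ) = -k by push_cast; ring, T_zero, map_one,
    pow_succ, pow_mul, neg_one_sq (R := Rv[T;T⁻¹])]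
  push_cast
  ring

/-- `M_k(m)` of the header: `qPoch (-k) (2 * k + 1)` is `W_k`. -/
noncomputable def windowMoment (k : ℕ) (m : ℤ) : Rv :=
  𝓛 (T m * qPoch (-k) (2 * k + 1))

theorem windowMoment_reflect (k : ℕ) (m : ℤ) :
    windowMoment k m = -windowMoment k (-m - (2 * k + 1)) := by
  have h : T (-m) * invert (qPoch (-k) (2 * k + 1)) =
      -(T (-m - (2 * k + 1)) * qPoch (-k) (2 * k + 1)) := by
    rw [invert_qPoch_window, sub_eq_add_neg, T_add]
    ring
  rw [windowMoment, ← gauss_invert, map_mul, invert_T, h, lap_neg, windowMoment]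

theorem windowMoment_neg (k : ℕ) : windowMoment k (-k) = -windowMoment k (-k - 1) := by
  rw [windowMoment_reflect]
  congr 2
  ring

theorem windowMoment_qShift (k : ℕ) (m : ℤ) :
    T (-(2 * m + 1)) * (windowMoment k (m + 1) - T (-(2 * k + 2)) * windowMoment k (m + 2)) =
      windowMoment k m - T (2 * k + 2) * windowMoment k (m + 1) := by
  have h := congrArg (fun f => 𝓛 (T m * f)) (qShift_one_sub_mul_qPoch (-k) (2 * k + 1))
  simp only [gauss_T_mul_qShift, lap_T_mul_one_sub_mul, add_assoc, one_add_one_eq_two] at h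
  rwa [show 2 * (-(k : ℤ) - 1) = -(2 * k + 2) by ring,
    show 2 * (-(k : ℤ) + ((2 * k + 1 : ℕ) : ℤ)) = 2 * k + 2 by push_cast; ring] at h

theorem gauss_T_mul_qPoch_window (k : ℕ) (m : ℤ) :
    𝓛 (T m * qPoch (-k) (2 * k + 1)) = windowMoment k m :=
  rfl

theorem qPoch_window_succ (k : ℕ) :
    qPoch (-(k + 1 : ℕ)) (2 * (k + 1) + 1) =
      (1 - T 1 * C (T (-(2 * k + 2)))) *
        ((1 - T 1 * C (T (2 * k + 2))) * qPoch (-k) (2 * k + 1)) := by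
  rw [show 2 * (k + 1) + 1 = 2 * k + 1 + 1 + 1 by ring, qPoch_succ', qPoch_succ,
    show -((k + 1 : ℕ) : ℤ) + 1 = -k by push_cast; ring,
    show 2 * -((k + 1 : ℕ) : ℤ) = -(2 * k + 2) by push_cast; ring,
    show 2 * (-(k : ℤ) + ((2 * k + 1 : ℕ) : ℤ)) = 2 * k + 2 by push_cast; ring]
  ring

theorem windowMoment_succ (k : ℕ) (m : ℤ) :
    windowMoment (k + 1) m = windowMoment k m - (T (2 * k + 2) + T (-(2 * k + 2))) *
      windowMoment k (m + 1) + windowMoment k (m + 2) := by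
  have hT : (T (2 * k + 2) * T (-(2 * k + 2)) : Rv) = 1 := by rw [← T_add, add_neg_cancel, T_zero]
  rw [windowMoment, qPoch_window_succ, lap_T_mul_one_sub_mul, lap_T_mul_one_sub_mul,
    lap_T_mul_one_sub_mul, add_assoc, one_add_one_eq_two, gauss_T_mul_qPoch_window,
    gauss_T_mul_qPoch_window, gauss_T_mul_qPoch_window]
  linear_combination windowMoment k (m + 2) * hT

theorem windowMoment_succ_neg (k : ℕ) :
    windowMoment (k + 1) (-(k + 1 : ℕ) - 1) =
      (T (2 * k + 3) + T 1 - 1 - T (-(2 * k + 2))) * windowMoment k (-k - 1) := by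
  have hshift := windowMoment_qShift k (-k - 2)
  have hsucc := windowMoment_succ k (-k - 2)
  have hT : (T (2 * k + 3) * T (-(2 * k + 2)) : Rv) = T 1 := by rw [← T_add]; ring_nf
  rw [show -(2 * (-(k : ℤ) - 2) + 1) = 2 * k + 3 by ring, show -(k : ℤ) - 2 + 1 = -k - 1 by ring,
    show -(k : ℤ) - 2 + 2 = -k by ring, windowMoment_neg] at hshift
  rw [show -(k : ℤ) - 2 + 1 = -k - 1 by ring, show -(k : ℤ) - 2 + 2 = -k by ring,
    windowMoment_neg] at hsucc
  rw [show -((k + 1 : ℕ) : ℤ) - 1 = -k - 2 by push_cast; ring, hsucc]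
  linear_combination -hshift + windowMoment k (-k - 1) * hT

theorem sign_mul_windowMoment (k : ℕ) :
    (-1) ^ (k + 1) * T (k * (k + 1)) * windowMoment k (-k - 1) =
      (1 - T 1) * ∏ i ∈ range (2 * k), (1 + (-T 1) ^ (i + 2)) := by
  induction k with
  | zero =>
    simp only [windowMoment, qPoch, CharP.cast_eq_zero, neg_zero, zero_sub, mul_zero, zero_add,
      prod_range_one, T_zero, map_one, mul_one, mul_sub, ← T_add, lap_sub, lap_T]
    norm_num [T_zero]
    ring
  | succ k ih =>
    have hT₁ : (T (2 * k + 2) * T 1 : Rv) = T (2 * k + 3) := by rw [← T_add]; ring_nf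
    have hT₂ : (T (2 * k + 2) * T (-(2 * k + 2)) : Rv) = 1 := by rw [← T_add, add_neg_cancel, T_zero]
    have heven : Even (2 * k + 2) := ⟨k + 1, by ring⟩
    have hodd : Odd (2 * k + 1 + 2) := ⟨k + 1, by ring⟩
    rw [windowMoment_succ_neg, show 2 * (k + 1) = 2 * k + 1 + 1 by ring, prod_range_succ,
      prod_range_succ, heven.neg_pow, hodd.neg_pow, T_pow, T_pow, pow_succ _ (k + 1),
      show ((2 * k + 2 : ℕ) : ℤ) * 1 = 2 * k + 2 by push_cast; ring,
      show ((2 * k + 1 + 2 : ℕ) : ℤ) * 1 = 2 * k + 3 by push_cast; ring,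
      show ((k + 1 : ℕ) : ℤ) * ((k + 1 : ℕ) + 1) = k * (k + 1) + (2 * k + 2) by push_cast; ring,
      T_add]
    linear_combination (1 + T (2 * k + 2)) * (1 - T (2 * k + 3)) * ih +
      (-1) ^ (k + 1) * T (k * (k + 1)) * windowMoment k (-k - 1) * (-hT₁ + hT₂)

theorem prod_one_sub_T_mul_C_T_two_pow (n : ℕ) :
    ∏ i ∈ range n, (1 - T 1 * C (T 2 ^ i) : Rv[T;T⁻¹]) = qPoch 0 n :=
  prod_congr rfl fun i _ => by rw [T_pow, zero_add, mul_comm (i : ℤ)]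

theorem prod_one_sub_T_neg_one_mul_C_T_two_pow (n : ℕ) :
    ∏ i ∈ range n, (1 - T (-1) * C (T 2 ^ i) : Rv[T;T⁻¹]) = invert (qPoch 0 n) := by
  rw [← prod_one_sub_T_mul_C_T_two_pow, map_prod]
  simp only [map_sub, map_one, map_mul, invert_T, invert_C]

theorem gauss_qPoch_mul_invert (k : ℕ) :
    𝓛 (qPoch 0 (k + 1) * invert (qPoch 0 (k + 1))) =
      2 * ((-1) ^ (k + 1) * T (k * (k + 1)) * windowMoment k (-k - 1)) := by
  have hW : qPoch 0 (k + 1) * qPoch (-k) (k + 1) = (1 - T 1 * C 1) * qPoch (-k) (2 * k + 1) := by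
    rw [qPoch_succ (-k) k, show 2 * k + 1 = k + (k + 1) by ring, qPoch_add (-k) k (k + 1),
      neg_add_cancel, mul_zero, T_zero]
    ring
  have hF : qPoch 0 (k + 1) * invert (qPoch 0 (k + 1)) =
      C ((-1) ^ (k + 1) * T (k * (k + 1))) *
        (T (-k - 1) * ((1 - T 1 * C 1) * qPoch (-k) (2 * k + 1))) := by
    rw [invert_qPoch, ← hW, show 1 - 0 - ((k + 1 : ℕ) : ℤ) = -k by push_cast; ring,
      show ((k + 1 : ℕ) : ℤ) * (2 * 0 + (k + 1 : ℕ) - 1) = k * (k + 1) by push_cast; ring,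
      show -((k + 1 : ℕ) : ℤ) = -k - 1 by push_cast; ring, map_mul, map_pow, map_neg, map_one]
    ring
  rw [hF, lap_C_mul, lap_T_mul_one_sub_mul, sub_add_cancel, gauss_T_mul_qPoch_window,
    gauss_T_mul_qPoch_window, windowMoment_neg]
  ring

/-- Lemma 5.2 (first formula): with `q = v²` and `L_{-2} : x^a ↦ v^{a²}`,
`L_{-2}((x;q)_{k+1}(x^{-1};q)_{k+1}) = 2 (1-v) (-v²;-v)_{2k}`. -/
theorem laplace_neg_two (k : ℕ) :
    Lap (fun a => T (a ^ 2))
        ((∏ i ∈ Finset.range (k + 1), (1 - T 1 * C (T 2 ^ i))) *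
          ∏ i ∈ Finset.range (k + 1), (1 - T (-1) * C (T 2 ^ i))) =
      2 * (1 - T 1) * ∏ i ∈ Finset.range (2 * k), (1 + (-T 1) ^ (i + 2)) := by
  rw [prod_one_sub_T_mul_C_T_two_pow, prod_one_sub_T_neg_one_mul_C_T_two_pow,
    gauss_qPoch_mul_invert, sign_mul_windowMoment, mul_assoc]
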